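/- arXiv:0903.1793 — 2 statements merged into one kernel-verified Lean document; each statement's English description precedes it below -/
import Mathlib

section
/- In the setting of the variation identity (controls ε, ε', solutions ψ̃, ψ̂, ψ̃', ψ̂', adjoint states χ̃, χ̂ with terminal condition O_{ψ₁}(ψ̃(T) − ψ̂(T))): if for every t ∈ [0,T] the pointwise inequality (ε'(t) − ε(t)) · ( 2 Im⟨χ̃(t), μ̃ ψ̃'(t)⟩ − 2 Im⟨χ̂(t), μ̂ ψ̂'(t)⟩ − β (ε'(t) + ε(t)) ) ≥ 0 holds, then J(ε') ≥ J(ε), i.e. the new control ε' is at least as selective as ε. -/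
/-!
For Hermitian `H + ε μ`, two solutions `χ`, `φ` driven by the controls `ε` and `ε'` satisfy
`d/dt Re⟪χ, φ⟫ = (ε' - ε) Im⟪χ, μ φ⟫`. Since `ψ̃` and `ψ̃'` both start at `ψ₀` while `χ̃` follows
the dynamics of `ψ̃`, integrating gives `Re⟪χ̃(T), ψ̃'(T) - ψ̃(T)⟫ = ∫ (ε' - ε) Im⟪χ̃, μ̃ ψ̃'⟫`, and
likewise for the hat system. The observable part of `J` is the convex quadratic form
`x ↦ |⟪ψ₁, x⟫|²`, so its increment from `ψ̃(T) - ψ̂(T)` to `ψ̃'(T) - ψ̂'(T)` is at least twice the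
real part of the pairing of the difference with `O_{ψ₁}(ψ̃(T) - ψ̂(T)) = χ̃(T) = χ̂(T)`. Together
with `ε'² - ε² = (ε' - ε)(ε' + ε)`, `J(ε') - J(ε)` dominates the integral of the pointwise
criterion, which is nonnegative.
-/

noncomputable section

open Matrix

/-- `ψ` solves the bilinear Schrödinger equation
`i ψ'(t) = (H + ε(t) μ) ψ(t)` on `[0, T]` with initial state `ψ₀`. -/
def IsSchrodSol {n : ℕ} (H μ : Matrix (Fin n) (Fin n) ℂ) (ε : ℝ → ℝ)
    (ψ₀ : EuclideanSpace ℂ (Fin n)) (T : ℝ) (ψ : ℝ → EuclideanSpace ℂ (Fin n)) : Prop :=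
  ψ 0 = ψ₀ ∧ ∀ t ∈ Set.Icc (0 : ℝ) T,
    HasDerivAt ψ ((-Complex.I) • (Matrix.toEuclideanLin (H + (ε t : ℂ) • μ) (ψ t))) t

/-- `χ` solves the adjoint equation `i χ'(t) = (H + ε(t) μ) χ(t)` on `[0, T]`
with terminal state `χ(T) = χT`. -/
def IsSchrodAdjSol {n : ℕ} (H μ : Matrix (Fin n) (Fin n) ℂ) (ε : ℝ → ℝ)
    (χT : EuclideanSpace ℂ (Fin n)) (T : ℝ) (χ : ℝ → EuclideanSpace ℂ (Fin n)) : Prop :=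
  χ T = χT ∧ ∀ t ∈ Set.Icc (0 : ℝ) T,
    HasDerivAt χ ((-Complex.I) • (Matrix.toEuclideanLin (H + (ε t : ℂ) • μ) (χ t))) t

/-- The rank-one observable `O_{ψ₁} : x ↦ ⟨ψ₁, x⟩ ψ₁`. -/
def rankOne {n : ℕ} (ψ₁ x : EuclideanSpace ℂ (Fin n)) : EuclideanSpace ℂ (Fin n) :=
  (inner ℂ ψ₁ x : ℂ) • ψ₁

/-- The selectivity functional
`J(ε) = ⟨ψ̃(T) − ψ̂(T), O_{ψ₁}(ψ̃(T) − ψ̂(T))⟩ − β ∫₀ᵀ ε(t)² dt`. -/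
def Jfun {n : ℕ} (T β : ℝ) (ψ₁ : EuclideanSpace ℂ (Fin n)) (ε : ℝ → ℝ)
    (ψt ψh : ℝ → EuclideanSpace ℂ (Fin n)) : ℝ :=
  (inner ℂ (ψt T - ψh T) (rankOne ψ₁ (ψt T - ψh T)) : ℂ).re
    - β * ∫ t in (0:ℝ)..T, (ε t) ^ 2

open Complex MeasureTheory Set
open scoped InnerProductSpace ComplexConjugate

section SchrodingerFlow

variable {E : Type*} [NormedAddCommGroup E] [InnerProductSpace ℂ E]

theorem hasDerivAt_inner_of_schrodinger {χ φ : ℝ → E} {A B : E →ₗ[ℂ] E} (hA : A.IsSymmetric)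
    {t : ℝ} (hχ : HasDerivAt χ (-I • A (χ t)) t) (hφ : HasDerivAt φ (-I • B (φ t)) t) :
    HasDerivAt (fun s => ⟪χ s, φ s⟫_ℂ) (I * ⟪χ t, (A - B) (φ t)⟫_ℂ) t := by
  refine (hχ.inner ℂ hφ).congr_deriv ?_
  rw [inner_smul_left, inner_smul_right, hA, LinearMap.sub_apply, inner_sub_right]
  simp only [map_neg, conj_I]
  ring

end SchrodingerFlow

variable {n : ℕ}

theorem isSymmetric_toEuclideanLin_add_smul {H μ : Matrix (Fin n) (Fin n) ℂ}
    (hH : H.IsHermitian) (hμ : μ.IsHermitian) (c : ℝ) :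
    (toEuclideanLin (H + (c : ℂ) • μ)).IsSymmetric :=
  isSymmetric_toEuclideanLin_iff.2 (hH.add (hμ.smul (conj_ofReal c)))

theorem hasDerivAt_re_inner_of_schrodinger {H μ : Matrix (Fin n) (Fin n) ℂ}
    (hH : H.IsHermitian) (hμ : μ.IsHermitian) {ε ε' : ℝ → ℝ}
    {χ φ : ℝ → EuclideanSpace ℂ (Fin n)} {t : ℝ}
    (hχ : HasDerivAt χ (-I • toEuclideanLin (H + (ε t : ℂ) • μ) (χ t)) t)
    (hφ : HasDerivAt φ (-I • toEuclideanLin (H + (ε' t : ℂ) • μ) (φ t)) t) :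
    HasDerivAt (fun s => (⟪χ s, φ s⟫_ℂ).re)
      ((ε' t - ε t) * (⟪χ t, toEuclideanLin μ (φ t)⟫_ℂ).im) t := by
  have hA := isSymmetric_toEuclideanLin_add_smul hH hμ (ε t)
  refine (reCLM.hasFDerivAt.comp_hasDerivAt t
    (hasDerivAt_inner_of_schrodinger hA hχ hφ)).congr_deriv ?_
  rw [reCLM_apply, ← map_sub, add_sub_add_left_eq_sub, ← sub_smul, ← ofReal_sub,
    map_smul, LinearMap.smul_apply, inner_smul_right]
  simp only [mul_re, I_re, I_im, ofReal_re, ofReal_im, mul_im]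
  ring

theorem intervalIntegrable_mul_im_inner {μ : Matrix (Fin n) (Fin n) ℂ} {f : ℝ → ℝ}
    (hf : Continuous f) {χ φ : ℝ → EuclideanSpace ℂ (Fin n)} {T : ℝ} (hT : 0 ≤ T)
    (hχ : ContinuousOn χ (Icc 0 T)) (hφ : ContinuousOn φ (Icc 0 T)) :
    IntervalIntegrable (fun t => f t * (⟪χ t, toEuclideanLin μ (φ t)⟫_ℂ).im) volume 0 T := by
  refine ContinuousOn.intervalIntegrable ?_
  rw [uIcc_of_le hT]
  have hμφ := (toEuclideanLin μ).continuous_of_finiteDimensional.comp_continuousOn hφ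
  exact hf.continuousOn.mul (continuous_im.comp_continuousOn (hχ.inner hμφ))

theorem re_inner_sub_re_inner_eq_integral {T : ℝ} (hT : 0 ≤ T) {H μ : Matrix (Fin n) (Fin n) ℂ}
    (hH : H.IsHermitian) (hμ : μ.IsHermitian) {ε ε' : ℝ → ℝ} (hε : Continuous ε)
    (hε' : Continuous ε') {χ φ : ℝ → EuclideanSpace ℂ (Fin n)}
    (hχ : ∀ t ∈ Icc 0 T, HasDerivAt χ (-I • toEuclideanLin (H + (ε t : ℂ) • μ) (χ t)) t)
    (hφ : ∀ t ∈ Icc 0 T, HasDerivAt φ (-I • toEuclideanLin (H + (ε' t : ℂ) • μ) (φ t)) t) :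
    (⟪χ T, φ T⟫_ℂ).re - (⟪χ 0, φ 0⟫_ℂ).re
      = ∫ t in (0 : ℝ)..T, (ε' t - ε t) * (⟪χ t, toEuclideanLin μ (φ t)⟫_ℂ).im := by
  refine (intervalIntegral.integral_eq_sub_of_hasDerivAt
    (f := fun s => (⟪χ s, φ s⟫_ℂ).re) (fun t ht => ?_) ?_).symm
  · rw [uIcc_of_le hT] at ht
    exact hasDerivAt_re_inner_of_schrodinger hH hμ (hχ t ht) (hφ t ht)
  · exact intervalIntegrable_mul_im_inner (hε'.sub hε) hT
      (continuousOn_of_forall_continuousAt fun t ht => (hχ t ht).continuousAt)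
      (continuousOn_of_forall_continuousAt fun t ht => (hφ t ht).continuousAt)

theorem IsSchrodSol.continuousOn {H μ : Matrix (Fin n) (Fin n) ℂ} {ε : ℝ → ℝ}
    {ψ₀ : EuclideanSpace ℂ (Fin n)} {T : ℝ} {ψ : ℝ → EuclideanSpace ℂ (Fin n)}
    (hψ : IsSchrodSol H μ ε ψ₀ T ψ) : ContinuousOn ψ (Icc 0 T) :=
  continuousOn_of_forall_continuousAt fun t ht => (hψ.2 t ht).continuousAt

theorem IsSchrodAdjSol.continuousOn {H μ : Matrix (Fin n) (Fin n) ℂ} {ε : ℝ → ℝ}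
    {χT : EuclideanSpace ℂ (Fin n)} {T : ℝ} {χ : ℝ → EuclideanSpace ℂ (Fin n)}
    (hχ : IsSchrodAdjSol H μ ε χT T χ) : ContinuousOn χ (Icc 0 T) :=
  continuousOn_of_forall_continuousAt fun t ht => (hχ.2 t ht).continuousAt

theorem IsSchrodAdjSol.re_inner_sub_eq_integral {T : ℝ} (hT : 0 ≤ T)
    {H μ : Matrix (Fin n) (Fin n) ℂ} (hH : H.IsHermitian) (hμ : μ.IsHermitian)
    {ε ε' : ℝ → ℝ} (hε : Continuous ε) (hε' : Continuous ε')
    {ψ₀ χT : EuclideanSpace ℂ (Fin n)} {ψ ψ' χ : ℝ → EuclideanSpace ℂ (Fin n)}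
    (hχ : IsSchrodAdjSol H μ ε χT T χ) (hψ : IsSchrodSol H μ ε ψ₀ T ψ)
    (hψ' : IsSchrodSol H μ ε' ψ₀ T ψ') :
    (⟪χT, ψ' T - ψ T⟫_ℂ).re
      = ∫ t in (0 : ℝ)..T, (ε' t - ε t) * (⟪χ t, toEuclideanLin μ (ψ' t)⟫_ℂ).im := by
  have h' := re_inner_sub_re_inner_eq_integral hT hH hμ hε hε' hχ.2 hψ'.2
  have h := re_inner_sub_re_inner_eq_integral hT hH hμ hε hε hχ.2 hψ.2
  simp only [sub_self, zero_mul, intervalIntegral.integral_zero] at h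
  rw [hχ.1, hψ.1, hψ'.1] at *
  rw [inner_sub_right, sub_re]
  linarith

theorem re_inner_rankOne_self (ψ₁ x : EuclideanSpace ℂ (Fin n)) :
    (⟪x, rankOne ψ₁ x⟫_ℂ).re = ‖⟪ψ₁, x⟫_ℂ‖ ^ 2 := by
  rw [rankOne, inner_smul_right, ← inner_conj_symm x ψ₁, mul_conj, ← Complex.sq_norm, ofReal_re]

theorem two_mul_re_inner_rankOne_sub_le (ψ₁ a b : EuclideanSpace ℂ (Fin n)) :
    2 * (⟪rankOne ψ₁ b, a - b⟫_ℂ).re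
      ≤ (⟪a, rankOne ψ₁ a⟫_ℂ).re - (⟪b, rankOne ψ₁ b⟫_ℂ).re := by
  rw [re_inner_rankOne_self, re_inner_rankOne_self, rankOne, inner_smul_left, inner_sub_right]
  set u := ⟪ψ₁, a⟫_ℂ
  set v := ⟪ψ₁, b⟫_ℂ
  have hsq : ‖u‖ ^ 2 - ‖v‖ ^ 2 - 2 * (conj v * (u - v)).re = ‖u - v‖ ^ 2 := by
    simp only [Complex.sq_norm, normSq_apply, mul_re, conj_re, conj_im, sub_re, sub_im]
    ring
  linarith [sq_nonneg ‖u - v‖]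

theorem integral_control_variation_eq {T β : ℝ} {ε ε' a b : ℝ → ℝ} (hε : Continuous ε)
    (hε' : Continuous ε') (ha : IntervalIntegrable (fun t => (ε' t - ε t) * a t) volume 0 T)
    (hb : IntervalIntegrable (fun t => (ε' t - ε t) * b t) volume 0 T) :
    ∫ t in (0 : ℝ)..T, (ε' t - ε t) * (2 * a t - 2 * b t - β * (ε' t + ε t))
      = 2 * (∫ t in (0 : ℝ)..T, (ε' t - ε t) * a t) - 2 * (∫ t in (0 : ℝ)..T, (ε' t - ε t) * b t)
        - β * ((∫ t in (0 : ℝ)..T, ε' t ^ 2) - ∫ t in (0 : ℝ)..T, ε t ^ 2) := by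
  have hε'sq : IntervalIntegrable (fun t => ε' t ^ 2) volume 0 T :=
    (hε'.pow 2).intervalIntegrable _ _
  have hεsq : IntervalIntegrable (fun t => ε t ^ 2) volume 0 T := (hε.pow 2).intervalIntegrable _ _
  rw [← intervalIntegral.integral_sub hε'sq hεsq, ← intervalIntegral.integral_const_mul,
    ← intervalIntegral.integral_const_mul, ← intervalIntegral.integral_const_mul,
    ← intervalIntegral.integral_sub (ha.const_mul 2) (hb.const_mul 2),
    ← intervalIntegral.integral_sub ((ha.const_mul 2).sub (hb.const_mul 2))
      ((hε'sq.sub hεsq).const_mul β)]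
  congr 1 with t
  ring

theorem monotonicity_criterion_general {n : ℕ} (T β : ℝ) (hT : 0 < T)
    (H : Matrix (Fin n) (Fin n) ℂ) (hH : H.IsHermitian)
    (ψ₀ ψ₁ : EuclideanSpace ℂ (Fin n))
    (μt μh : Matrix (Fin n) (Fin n) ℂ) (hμt : μt.IsHermitian) (hμh : μh.IsHermitian)
    (ε ε' : ℝ → ℝ) (hε : Continuous ε) (hε' : Continuous ε')
    (ψt ψh ψt' ψh' : ℝ → EuclideanSpace ℂ (Fin n))
    (hψt : IsSchrodSol H μt ε ψ₀ T ψt) (hψh : IsSchrodSol H μh ε ψ₀ T ψh)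
    (hψt' : IsSchrodSol H μt ε' ψ₀ T ψt') (hψh' : IsSchrodSol H μh ε' ψ₀ T ψh')
    (χt χh : ℝ → EuclideanSpace ℂ (Fin n))
    (hχt : IsSchrodAdjSol H μt ε (rankOne ψ₁ (ψt T - ψh T)) T χt)
    (hχh : IsSchrodAdjSol H μh ε (rankOne ψ₁ (ψt T - ψh T)) T χh)
    (hpointwise : ∀ t ∈ Set.Icc (0 : ℝ) T,
      0 ≤ (ε' t - ε t) *
          (2 * (inner ℂ (χt t) (Matrix.toEuclideanLin μt (ψt' t)) : ℂ).im
           - 2 * (inner ℂ (χh t) (Matrix.toEuclideanLin μh (ψh' t)) : ℂ).im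
           - β * (ε' t + ε t))) :
    Jfun T β ψ₁ ε ψt ψh ≤ Jfun T β ψ₁ ε' ψt' ψh' := by
  have hquad := two_mul_re_inner_rankOne_sub_le ψ₁ (ψt' T - ψh' T) (ψt T - ψh T)
  set O := rankOne ψ₁ (ψt T - ψh T)
  have hsplit : ⟪O, (ψt' T - ψh' T) - (ψt T - ψh T)⟫_ℂ
      = ⟪O, ψt' T - ψt T⟫_ℂ - ⟪O, ψh' T - ψh T⟫_ℂ := by
    rw [← inner_sub_right, sub_sub_sub_comm]
  have hvart := hχt.re_inner_sub_eq_integral hT.le hH hμt hε hε' hψt hψt'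
  have hvarh := hχh.re_inner_sub_eq_integral hT.le hH hμh hε hε' hψh hψh'
  have hint := intervalIntegral.integral_nonneg (μ := volume) hT.le hpointwise
  have hIt := intervalIntegrable_mul_im_inner (μ := μt) (hε'.sub hε) hT.le
    hχt.continuousOn hψt'.continuousOn
  have hIh := intervalIntegrable_mul_im_inner (μ := μh) (hε'.sub hε) hT.le
    hχh.continuousOn hψh'.continuousOn
  have hlin := integral_control_variation_eq (β := β) hε hε' hIt hIh
  rw [Jfun, Jfun]
  rw [hsplit, sub_re, hvart, hvarh] at hquad
  linarith

/-- if the pointwise monotonicity criterion holds for all `t ∈ [0,T]`,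
then `J(ε') ≥ J(ε)`, i.e. the new control `ε'` is at least as selective as `ε`. -/
theorem monotonicity_criterion {n : ℕ} (T β : ℝ) (hT : 0 < T) (hβ : 0 < β)
    (H : Matrix (Fin n) (Fin n) ℂ) (hH : H.IsHermitian)
    (ψ₀ ψ₁ : EuclideanSpace ℂ (Fin n)) (hψ₀ : ‖ψ₀‖ = 1) (hψ₁ : ‖ψ₁‖ = 1)
    (μt μh : Matrix (Fin n) (Fin n) ℂ) (hμt : μt.IsHermitian) (hμh : μh.IsHermitian)
    (ε ε' : ℝ → ℝ) (hε : Continuous ε) (hε' : Continuous ε')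
    (ψt ψh ψt' ψh' : ℝ → EuclideanSpace ℂ (Fin n))
    (hψt : IsSchrodSol H μt ε ψ₀ T ψt) (hψh : IsSchrodSol H μh ε ψ₀ T ψh)
    (hψt' : IsSchrodSol H μt ε' ψ₀ T ψt') (hψh' : IsSchrodSol H μh ε' ψ₀ T ψh')
    (χt χh : ℝ → EuclideanSpace ℂ (Fin n))
    (hχt : IsSchrodAdjSol H μt ε (rankOne ψ₁ (ψt T - ψh T)) T χt)
    (hχh : IsSchrodAdjSol H μh ε (rankOne ψ₁ (ψt T - ψh T)) T χh)
    (hpointwise : ∀ t ∈ Set.Icc (0 : ℝ) T,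
      0 ≤ (ε' t - ε t) *
          (2 * (inner ℂ (χt t) (Matrix.toEuclideanLin μt (ψt' t)) : ℂ).im
           - 2 * (inner ℂ (χh t) (Matrix.toEuclideanLin μh (ψh' t)) : ℂ).im
           - β * (ε' t + ε t))) :
    Jfun T β ψ₁ ε ψt ψh ≤ Jfun T β ψ₁ ε' ψt' ψh' :=
  monotonicity_criterion_general T β hT H hH ψ₀ ψ₁ μt μh hμt hμh ε ε' hε hε' ψt ψh ψt' ψh' hψt hψh
    hψt' hψh' χt χh hχt hχh hpointwise
end
end

section
/- Let ε, ε' ∈ ℝᴹ be two discrete controls, let ψ̃, ψ̂ (resp. ψ̃', ψ̂') be the discrete trajectories generated from ψ₀ by the Strang propagators with control ε (resp. ε') and Hermitian dipoles μ̃, μ̂, and let χ̃, χ̂ be the discrete adjoint trajectories propagated by the Strang propagators with control ε and dipoles μ̃, μ̂ respectively, normalized so that χ̃_M = χ̂_M = O_{ψ₁}(ψ̃_M − ψ̂_M). Set δψ_M = ψ̃_M − ψ̂_M and δψ'_M = ψ̃'_M − ψ̂'_M. Then J_{Δt}(ε') − J_{Δt}(ε) = ⟨δψ'_M − δψ_M,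 O_{ψ₁}(δψ'_M − δψ_M)⟩ + Σ_{j=0}^{M−1} [ 2 Re⟨χ̃_{j+1}, (Ũ_j(ε') − Ũ_j(ε)) ψ̃'_j⟩ − 2 Re⟨χ̂_{j+1}, (Û_j(ε') − Û_j(ε)) ψ̂'_j⟩ − β Δt ((ε'_j)² − (ε_j)²) ], where Ũ_j and Û_j denote the Strang propagators built with dipoles μ̃ and μ̂ respectively. -/
noncomputable section

open Matrix

/-- The Strang splitting propagator
`U = exp(i H Δt/2) · exp(i ε_j μ Δt) · exp(i H Δt/2)`. -/
def strangU {n : ℕ} (H μ : Matrix (Fin n) (Fin n) ℂ) (Δt εj : ℝ) :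
    Matrix (Fin n) (Fin n) ℂ :=
  NormedSpace.exp ((Complex.I * ((Δt : ℂ) / 2)) • H) *
  NormedSpace.exp ((Complex.I * (εj : ℂ) * (Δt : ℂ)) • μ) *
  NormedSpace.exp ((Complex.I * ((Δt : ℂ) / 2)) • H)

/-- The time-discretized selectivity functional
`J_{Δt}(ε) = ⟨ψ̃_M − ψ̂_M, O_{ψ₁}(ψ̃_M − ψ̂_M)⟩ − β Δt Σ_{j<M} ε_j²`,
expressed in terms of the discrete trajectories `ψ̃, ψ̂`. -/
def Jdisc {n : ℕ} (M : ℕ) (Δt β : ℝ) (ψ₁ : EuclideanSpace ℂ (Fin n)) (ε : ℕ → ℝ)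
    (ψt ψh : ℕ → EuclideanSpace ℂ (Fin n)) : ℝ :=
  (inner ℂ (ψt M - ψh M) (rankOne ψ₁ (ψt M - ψh M)) : ℂ).re
    - β * Δt * ∑ j ∈ Finset.range M, (ε j) ^ 2

/-! Each Strang propagator is unitary, so the pairing of the adjoint trajectory `χ` with a
trajectory driven by the same propagators is conserved. Hence
`∑ⱼ ⟪χ_{j+1}, (U_j(ε') - U_j(ε)) ψ'_j⟫` telescopes to `⟪χ_M, ψ'_M - ψ_M⟫`, and the difference
of the two telescoped sums is the cross term `2 Re ⟪O δψ_M, δψ'_M - δψ_M⟫` in the expansion of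
the symmetric quadratic form `x ↦ ⟪x, O x⟫` around `δψ_M`. -/

open scoped InnerProductSpace

section Unitarity

variable {𝕜 ι : Type*} [RCLike 𝕜] [Fintype ι] [DecidableEq ι]

theorem Matrix.IsHermitian.exp_smul_mem_unitary {A : Matrix ι ι 𝕜} (hA : A.IsHermitian) {c : 𝕜}
    (hc : c ∈ skewAdjoint 𝕜) : NormedSpace.exp (c • A) ∈ unitary (Matrix ι ι 𝕜) := by
  have hskew : star (c • A) = -(c • A) :=
    skewAdjoint.mem_iff.mp (hA.isSelfAdjoint.smul_mem_skewAdjoint hc)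
  rw [Unitary.mem_iff, NormedSpace.star_exp, hskew,
    ← Matrix.exp_add_of_commute _ _ (Commute.refl (c • A)).neg_left,
    ← Matrix.exp_add_of_commute _ _ (Commute.refl (c • A)).neg_right,
    neg_add_cancel, add_neg_cancel, NormedSpace.exp_zero, and_self]

theorem Matrix.inner_toEuclideanLin_of_mem_unitary {U : Matrix ι ι 𝕜}
    (hU : U ∈ unitary (Matrix ι ι 𝕜)) (x y : EuclideanSpace 𝕜 ι) :
    ⟪toEuclideanLin U x, toEuclideanLin U y⟫_𝕜 = ⟪x, y⟫_𝕜 :=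
  (toEuclideanCLM (𝕜 := 𝕜) U).inner_map_map_of_mem_unitary
    (Unitary.map_mem toEuclideanCLM hU) x y

end Unitarity

theorem strangU_mem_unitary {n : ℕ} {H μ : Matrix (Fin n) (Fin n) ℂ} (hH : H.IsHermitian)
    (hμ : μ.IsHermitian) (Δt e : ℝ) : strangU H μ Δt e ∈ unitary (Matrix (Fin n) (Fin n) ℂ) := by
  have hI : ∀ r : ℝ, Complex.I * r ∈ skewAdjoint ℂ := fun r => by
    simp [skewAdjoint.mem_iff]
  have hHalf := hH.exp_smul_mem_unitary (by simpa using hI (Δt / 2))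
  have hKick := hμ.exp_smul_mem_unitary (c := Complex.I * e * Δt)
    (by simpa [mul_assoc] using hI (e * Δt))
  exact mul_mem (mul_mem hHalf hKick) hHalf

section DiscreteEvolution

variable {𝕜 E : Type*} [RCLike 𝕜] [SeminormedAddCommGroup E] [InnerProductSpace 𝕜 E]
  {M : ℕ} {U V : ℕ → E →ₗ[𝕜] E} {χ ψ φ : ℕ → E}

theorem inner_eq_of_isometric_evolution (hU : ∀ j x y, ⟪U j x, U j y⟫_𝕜 = ⟪x, y⟫_𝕜)
    (hχ : ∀ j < M, χ (j + 1) = U j (χ j)) (hψ : ∀ j < M, ψ (j + 1) = U j (ψ j)) :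
    ∀ j ≤ M, ⟪χ j, ψ j⟫_𝕜 = ⟪χ 0, ψ 0⟫_𝕜
  | 0, _ => rfl
  | j + 1, hj => by
    rw [hχ j hj, hψ j hj, hU, inner_eq_of_isometric_evolution hU hχ hψ j (by omega)]

theorem sum_inner_sub_apply_eq_inner_sub (hU : ∀ j x y, ⟪U j x, U j y⟫_𝕜 = ⟪x, y⟫_𝕜)
    (hχ : ∀ j < M, χ (j + 1) = U j (χ j)) (hψ : ∀ j < M, ψ (j + 1) = U j (ψ j))
    (hφ : ∀ j < M, φ (j + 1) = V j (φ j)) (h0 : φ 0 = ψ 0) :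
    ∑ j ∈ Finset.range M, ⟪χ (j + 1), (V j - U j) (φ j)⟫_𝕜 = ⟪χ M, φ M - ψ M⟫_𝕜 := by
  have hstep : ∀ j ∈ Finset.range M,
      ⟪χ (j + 1), (V j - U j) (φ j)⟫_𝕜 = ⟪χ (j + 1), φ (j + 1)⟫_𝕜 - ⟪χ j, φ j⟫_𝕜 := by
    intro j hj
    have hj := Finset.mem_range.mp hj
    rw [LinearMap.sub_apply, inner_sub_right, ← hφ j hj, hχ j hj, hU]
  rw [Finset.sum_congr rfl hstep, Finset.sum_range_sub (fun j => ⟪χ j, φ j⟫_𝕜), inner_sub_right,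
    h0, inner_eq_of_isometric_evolution hU hχ hψ M le_rfl]

end DiscreteEvolution

theorem sum_inner_strangU_sub_apply {n M : ℕ} {H μ : Matrix (Fin n) (Fin n) ℂ}
    (hH : H.IsHermitian) (hμ : μ.IsHermitian) {Δt : ℝ} {ε ε' : ℕ → ℝ}
    {χ ψ ψ' : ℕ → EuclideanSpace ℂ (Fin n)}
    (hχ : ∀ j < M, χ (j + 1) = Matrix.toEuclideanLin (strangU H μ Δt (ε j)) (χ j))
    (hψ : ∀ j < M, ψ (j + 1) = Matrix.toEuclideanLin (strangU H μ Δt (ε j)) (ψ j))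
    (hψ' : ∀ j < M, ψ' (j + 1) = Matrix.toEuclideanLin (strangU H μ Δt (ε' j)) (ψ' j))
    (h0 : ψ' 0 = ψ 0) :
    ∑ j ∈ Finset.range M, ⟪χ (j + 1), Matrix.toEuclideanLin
        (strangU H μ Δt (ε' j) - strangU H μ Δt (ε j)) (ψ' j)⟫_ℂ = ⟪χ M, ψ' M - ψ M⟫_ℂ := by
  simp only [map_sub]
  exact sum_inner_sub_apply_eq_inner_sub
    (fun j => Matrix.inner_toEuclideanLin_of_mem_unitary (strangU_mem_unitary hH hμ Δt (ε j)))
    hχ hψ hψ' h0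

theorem LinearMap.IsSymmetric.re_inner_map_self_sub {𝕜 E : Type*} [RCLike 𝕜]
    [SeminormedAddCommGroup E] [InnerProductSpace 𝕜 E] {T : E →ₗ[𝕜] E} (hT : T.IsSymmetric)
    (u v : E) :
    RCLike.re ⟪u, T u⟫_𝕜 - RCLike.re ⟪v, T v⟫_𝕜
      = RCLike.re ⟪u - v, T (u - v)⟫_𝕜 + 2 * RCLike.re ⟪T v, u - v⟫_𝕜 := by
  obtain ⟨d, rfl⟩ : ∃ d, u = d + v := ⟨u - v, by abel⟩
  rw [add_sub_cancel_right, map_add, inner_add_left, inner_add_right, inner_add_right,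
    ← hT v d]
  simp only [map_add, inner_re_symm d (T v)]
  ring

theorem re_inner_rankOne_self_sub {n : ℕ} (ψ₁ u v : EuclideanSpace ℂ (Fin n)) :
    (⟪u, rankOne ψ₁ u⟫_ℂ).re - (⟪v, rankOne ψ₁ v⟫_ℂ).re
      = (⟪u - v, rankOne ψ₁ (u - v)⟫_ℂ).re + 2 * (⟪rankOne ψ₁ v, u - v⟫_ℂ).re :=
  (InnerProductSpace.isSymmetric_rankOne_self (𝕜 := ℂ) ψ₁).re_inner_map_self_sub u v

theorem discrete_variation_identity_general {n : ℕ} (M : ℕ) (Δt β : ℝ)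
    (H μt μh : Matrix (Fin n) (Fin n) ℂ) (hH : H.IsHermitian)
    (hμt : μt.IsHermitian) (hμh : μh.IsHermitian)
    (ψ₀ ψ₁ : EuclideanSpace ℂ (Fin n))
    (ε ε' : ℕ → ℝ)
    (ψt ψh ψt' ψh' χt χh : ℕ → EuclideanSpace ℂ (Fin n))
    (hψt0 : ψt 0 = ψ₀) (hψh0 : ψh 0 = ψ₀) (hψt'0 : ψt' 0 = ψ₀) (hψh'0 : ψh' 0 = ψ₀)
    (hψt : ∀ j < M, ψt (j + 1) = Matrix.toEuclideanLin (strangU H μt Δt (ε j)) (ψt j))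
    (hψh : ∀ j < M, ψh (j + 1) = Matrix.toEuclideanLin (strangU H μh Δt (ε j)) (ψh j))
    (hψt' : ∀ j < M, ψt' (j + 1) = Matrix.toEuclideanLin (strangU H μt Δt (ε' j)) (ψt' j))
    (hψh' : ∀ j < M, ψh' (j + 1) = Matrix.toEuclideanLin (strangU H μh Δt (ε' j)) (ψh' j))
    (hχt : ∀ j < M, χt (j + 1) = Matrix.toEuclideanLin (strangU H μt Δt (ε j)) (χt j))
    (hχh : ∀ j < M, χh (j + 1) = Matrix.toEuclideanLin (strangU H μh Δt (ε j)) (χh j))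
    (hχtM : χt M = rankOne ψ₁ (ψt M - ψh M))
    (hχhM : χh M = rankOne ψ₁ (ψt M - ψh M)) :
    Jdisc M Δt β ψ₁ ε' ψt' ψh' - Jdisc M Δt β ψ₁ ε ψt ψh =
      (inner ℂ ((ψt' M - ψh' M) - (ψt M - ψh M))
        (rankOne ψ₁ ((ψt' M - ψh' M) - (ψt M - ψh M))) : ℂ).re
      + ∑ j ∈ Finset.range M,
          (2 * (inner ℂ (χt (j + 1))
              (Matrix.toEuclideanLin (strangU H μt Δt (ε' j) - strangU H μt Δt (ε j))
                (ψt' j)) : ℂ).re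
           - 2 * (inner ℂ (χh (j + 1))
              (Matrix.toEuclideanLin (strangU H μh Δt (ε' j) - strangU H μh Δt (ε j))
                (ψh' j)) : ℂ).re
           - β * Δt * ((ε' j) ^ 2 - (ε j) ^ 2)) := by
  have ht := sum_inner_strangU_sub_apply hH hμt hχt hψt hψt' (hψt'0.trans hψt0.symm)
  have hh := sum_inner_strangU_sub_apply hH hμh hχh hψh hψh' (hψh'0.trans hψh0.symm)
  have hquad := re_inner_rankOne_self_sub ψ₁ (ψt' M - ψh' M) (ψt M - ψh M)
  have hcross : (⟪rankOne ψ₁ (ψt M - ψh M), ψt' M - ψt M⟫_ℂ).re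
      - (⟪rankOne ψ₁ (ψt M - ψh M), ψh' M - ψh M⟫_ℂ).re
      = (⟪rankOne ψ₁ (ψt M - ψh M), (ψt' M - ψh' M) - (ψt M - ψh M)⟫_ℂ).re := by
    rw [← Complex.sub_re, ← inner_sub_right]
    congr 2
    abel
  simp only [Jdisc, Finset.sum_sub_distrib, ← Finset.mul_sum, ← Complex.re_sum, ht, hh, hχtM,
    hχhM]
  linarith

/-- the discrete variation identity for the time-discretized
selectivity functional. -/
theorem discrete_variation_identity {n : ℕ} (M : ℕ) (Δt T β : ℝ) (hΔt : 0 < Δt)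
    (hMT : M * Δt = T) (hβ : 0 < β)
    (H μt μh : Matrix (Fin n) (Fin n) ℂ) (hH : H.IsHermitian)
    (hμt : μt.IsHermitian) (hμh : μh.IsHermitian)
    (ψ₀ ψ₁ : EuclideanSpace ℂ (Fin n)) (hψ₀ : ‖ψ₀‖ = 1) (hψ₁ : ‖ψ₁‖ = 1)
    (ε ε' : ℕ → ℝ)
    (ψt ψh ψt' ψh' χt χh : ℕ → EuclideanSpace ℂ (Fin n))
    (hψt0 : ψt 0 = ψ₀) (hψh0 : ψh 0 = ψ₀) (hψt'0 : ψt' 0 = ψ₀) (hψh'0 : ψh' 0 = ψ₀)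
    (hψt : ∀ j < M, ψt (j + 1) = Matrix.toEuclideanLin (strangU H μt Δt (ε j)) (ψt j))
    (hψh : ∀ j < M, ψh (j + 1) = Matrix.toEuclideanLin (strangU H μh Δt (ε j)) (ψh j))
    (hψt' : ∀ j < M, ψt' (j + 1) = Matrix.toEuclideanLin (strangU H μt Δt (ε' j)) (ψt' j))
    (hψh' : ∀ j < M, ψh' (j + 1) = Matrix.toEuclideanLin (strangU H μh Δt (ε' j)) (ψh' j))
    (hχt : ∀ j < M, χt (j + 1) = Matrix.toEuclideanLin (strangU H μt Δt (ε j)) (χt j))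
    (hχh : ∀ j < M, χh (j + 1) = Matrix.toEuclideanLin (strangU H μh Δt (ε j)) (χh j))
    (hχtM : χt M = rankOne ψ₁ (ψt M - ψh M))
    (hχhM : χh M = rankOne ψ₁ (ψt M - ψh M)) :
    Jdisc M Δt β ψ₁ ε' ψt' ψh' - Jdisc M Δt β ψ₁ ε ψt ψh =
      (inner ℂ ((ψt' M - ψh' M) - (ψt M - ψh M))
        (rankOne ψ₁ ((ψt' M - ψh' M) - (ψt M - ψh M))) : ℂ).re
      + ∑ j ∈ Finset.range M,
          (2 * (inner ℂ (χt (j + 1))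
              (Matrix.toEuclideanLin (strangU H μt Δt (ε' j) - strangU H μt Δt (ε j))
                (ψt' j)) : ℂ).re
           - 2 * (inner ℂ (χh (j + 1))
              (Matrix.toEuclideanLin (strangU H μh Δt (ε' j) - strangU H μh Δt (ε j))
                (ψh' j)) : ℂ).re
           - β * Δt * ((ε' j) ^ 2 - (ε j) ^ 2)) :=
  discrete_variation_identity_general M Δt β H μt μh hH hμt hμh ψ₀ ψ₁ ε ε' ψt ψh ψt' ψh' χt χh hψt0
    hψh0 hψt'0 hψh'0 hψt hψh hψt' hψh' hχt hχh hχtM hχhM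
end
end
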